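/- arXiv:2111.14752 — 10 statements merged into one kernel-verified Lean document; each statement's English description precedes it below -/
import Mathlib

section
/- Every t-definer is continuous at the origin in the following sense: for every r > 0 there exists r₁ > 0 such that for all a, b ∈ [0, r₁), a ⋆ b < r. -/
/-- A t-definer: commutative, associative, monotone, identity 0, continuous in
its first component (on the relevant domain `[0,∞)`). -/
structure IsTDefiner (star : ℝ → ℝ → ℝ) : Prop where
  nonneg : ∀ a b, 0 ≤ a → 0 ≤ b → 0 ≤ star a b
  comm : ∀ a b, 0 ≤ a → 0 ≤ b → star a b = star b a
  assoc : ∀ a b c, 0 ≤ a → 0 ≤ b → 0 ≤ c → star a (star b c) = star (star a b) c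
  mono : ∀ a b c, 0 ≤ a → 0 ≤ b → 0 ≤ c → a ≤ b → star a c ≤ star b c
  zero_id : ∀ a, 0 ≤ a → star a 0 = a
  cont : ∀ b, 0 ≤ b → ContinuousOn (fun a => star a b) (Set.Ici (0 : ℝ))

/-- A ⋆-metric with respect to the t-definer `star`. -/
structure IsStarMetric (star : ℝ → ℝ → ℝ) {X : Type*} (d : X → X → ℝ) : Prop where
  nonneg : ∀ x y, 0 ≤ d x y
  eq_zero_iff : ∀ x y, d x y = 0 ↔ x = y
  symm : ∀ x y, d x y = d y x
  star_triangle : ∀ x y z, d x y ≤ star (d x z) (d z y)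

/-- The topology induced by the open balls of a ⋆-metric. -/
def starTop {X : Type*} (d : X → X → ℝ) : TopologicalSpace X where
  IsOpen U := ∀ a ∈ U, ∃ r > 0, {x | d a x < r} ⊆ U
  isOpen_univ := fun _ _ => ⟨1, one_pos, fun _ _ => trivial⟩
  isOpen_inter := by
    intro U V hU hV a ha
    obtain ⟨r1, hr1, h1⟩ := hU a ha.1
    obtain ⟨r2, hr2, h2⟩ := hV a ha.2
    refine ⟨min r1 r2, lt_min hr1 hr2, fun x hx => ?_⟩
    have hx' : d a x < min r1 r2 := hx
    exact ⟨h1 (show d a x < r1 from lt_of_lt_of_le hx' (min_le_left _ _)),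
      h2 (show d a x < r2 from lt_of_lt_of_le hx' (min_le_right _ _))⟩
  isOpen_sUnion := by
    intro S hS a ha
    obtain ⟨U, hU, haU⟩ := ha
    obtain ⟨r, hr, h⟩ := hS U hU a haU
    exact ⟨r, hr, fun x hx => ⟨U, hU, h hx⟩⟩

/-- Total boundedness of a subset `M` of a ⋆-metric space. -/
def StarTotallyBoundedOn {X : Type*} (d : X → X → ℝ) (M : Set X) : Prop :=
  ∀ ε > 0, ∃ F : Finset X, ↑F ⊆ M ∧ ∀ x ∈ M, ∃ y ∈ F, d y x < ε

/-- Total boundedness of a ⋆-metric space. -/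
def StarTotallyBounded {X : Type*} (d : X → X → ℝ) : Prop :=
  ∀ ε > 0, ∃ F : Finset X, ∀ x : X, ∃ y ∈ F, d y x < ε

/-- Cauchy sequence in a ⋆-metric space. -/
def StarCauchy {X : Type*} (d : X → X → ℝ) (x : ℕ → X) : Prop :=
  ∀ ε > 0, ∃ k, ∀ m ≥ k, ∀ n ≥ k, d (x m) (x n) < ε

/-- Convergence of a sequence to a point in a ⋆-metric space. -/
def StarConvTo {X : Type*} (d : X → X → ℝ) (x : ℕ → X) (x₀ : X) : Prop :=
  ∀ ε > 0, ∃ k, ∀ n ≥ k, d (x n) x₀ < ε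

/-- Completeness of a ⋆-metric space. -/
def StarComplete {X : Type*} (d : X → X → ℝ) : Prop :=
  ∀ x : ℕ → X, StarCauchy d x → ∃ x₀, StarConvTo d x x₀

theorem tDefiner_continuous_at_origin (star : ℝ → ℝ → ℝ) (ht : IsTDefiner star) :
    ∀ r > (0:ℝ), ∃ r₁ > (0:ℝ), ∀ a b : ℝ, 0 ≤ a → a < r₁ → 0 ≤ b → b < r₁ →
      star a b < r := by
  intro r hr
  have hr2 : (0:ℝ) < r / 2 := by linarith
  have hcont := (ht.cont (r/2) hr2.le) 0 (Set.self_mem_Ici)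
  have hval : star 0 (r/2) = r/2 := by
    rw [ht.comm 0 (r/2) le_rfl hr2.le, ht.zero_id (r/2) hr2.le]
  rw [Metric.continuousWithinAt_iff] at hcont
  obtain ⟨δ, hδ, hδ'⟩ := hcont (r - r/2) (by linarith)
  refine ⟨min δ (r/2), lt_min hδ hr2, fun a b ha haδ hb hbδ => ?_⟩
  have h1 : star b a ≤ star (r/2) a :=
    ht.mono b (r/2) a hb hr2.le ha (le_of_lt (lt_of_lt_of_le hbδ (min_le_right _ _)))
  have h2 : star (r/2) a = star a (r/2) := ht.comm _ _ hr2.le ha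
  have h3 : dist (star a (r/2)) (star 0 (r/2)) < r - r/2 := by
    apply hδ' ha
    rw [Real.dist_eq, sub_zero, abs_of_nonneg ha]
    exact lt_of_lt_of_le haδ (min_le_left _ _)
  rw [hval, Real.dist_eq, abs_sub_lt_iff] at h3
  have h4 : star a (r/2) < r := by linarith [h3.1]
  calc star a b = star b a := ht.comm a b ha hb
    _ ≤ star (r/2) a := h1
    _ = star a (r/2) := h2
    _ < r := h4
end

section
/- For every ⋆-metric space (X, d⋆), the family 𝒯 = {U ⊆ X : for each a ∈ U there is r > 0 with B(a,r) ⊆ U}, where B(a,r) = {x : d⋆(a,x) < r}, forms a topology on X, and this topology is Hausdorff. -/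
lemma star_small_first {star : ℝ → ℝ → ℝ} (ht : IsTDefiner star) {t r : ℝ}
    (htt : 0 ≤ t) (htr : t < r) :
    ∃ s > 0, ∀ a, 0 ≤ a → a < s → star a t < r := by
  have hc : ContinuousWithinAt (fun a => star a t) (Set.Ici 0) 0 :=
    (ht.cont t htt) 0 Set.self_mem_Ici
  have h0 : star 0 t = t := by rw [ht.comm 0 t le_rfl htt, ht.zero_id t htt]
  have hmem : (fun a => star a t) ⁻¹' Set.Iio r ∈ nhdsWithin (0:ℝ) (Set.Ici 0) :=
    hc (Iio_mem_nhds (by show star 0 t < r; rw [h0]; exact htr))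
  rw [Metric.mem_nhdsWithin_iff] at hmem
  obtain ⟨ε, hε, hsub⟩ := hmem
  refine ⟨ε, hε, fun a ha has => ?_⟩
  have : a ∈ Metric.ball (0:ℝ) ε ∩ Set.Ici 0 := by
    constructor
    · simp [Real.dist_eq, abs_of_nonneg ha, has]
    · exact ha
  exact hsub this

lemma star_ball_open {X : Type*} {star : ℝ → ℝ → ℝ} {d : X → X → ℝ}
    (ht : IsTDefiner star) (hd : IsStarMetric star d) (a : X) (r : ℝ) :
    (starTop d).IsOpen {x | d a x < r} := by
  intro z hz
  have hz' : d a z < r := hz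
  obtain ⟨s, hs, hkey⟩ := star_small_first ht (hd.nonneg a z) hz'
  refine ⟨s, hs, fun w hw => ?_⟩
  have hw' : d z w < s := hw
  calc d a w ≤ star (d a z) (d z w) := hd.star_triangle a w z
    _ = star (d z w) (d a z) := ht.comm _ _ (hd.nonneg a z) (hd.nonneg z w)
    _ < r := hkey _ (hd.nonneg z w) hw'

theorem starMetric_topology_hausdorff {X : Type*} (star : ℝ → ℝ → ℝ) (d : X → X → ℝ)
    (ht : IsTDefiner star) (hd : IsStarMetric star d) :
    ∃ t : TopologicalSpace X,
      (∀ U : Set X, t.IsOpen U ↔ ∀ a ∈ U, ∃ r > (0:ℝ), {x | d a x < r} ⊆ U) ∧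
      @T2Space X t := by
  refine ⟨starTop d, fun U => Iff.rfl, ?_⟩
  letI := starTop d
  constructor
  intro x y hxy
  set ε := d x y with hε
  have hεpos : 0 < ε := by
    rcases lt_or_eq_of_le (hd.nonneg x y) with h | h
    · exact h
    · exact absurd ((hd.eq_zero_iff x y).mp h.symm) hxy
  obtain ⟨s, hs, hkey⟩ := star_small_first ht (le_of_lt (half_pos hεpos)) (half_lt_self hεpos)
  set r := min (s / 2) (ε / 2) with hr
  have hrpos : 0 < r := lt_min (half_pos hs) (half_pos hεpos)
  have hrs : r < s := lt_of_le_of_lt (min_le_left _ _) (half_lt_self hs)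
  have hrε : r ≤ ε / 2 := min_le_right _ _
  have hstar : star r r < ε := by
    calc star r r ≤ star (ε / 2) r :=
          ht.mono r (ε/2) r hrpos.le (half_pos hεpos).le hrpos.le hrε
      _ = star r (ε / 2) := ht.comm _ _ (half_pos hεpos).le hrpos.le
      _ < ε := hkey r hrpos.le hrs
  refine ⟨{z | d x z < r}, {z | d y z < r}, star_ball_open ht hd x r,
    star_ball_open ht hd y r, ?_, ?_, ?_⟩
  · show d x x < r; rw [(hd.eq_zero_iff x x).mpr rfl]; exact hrpos
  · show d y y < r; rw [(hd.eq_zero_iff y y).mpr rfl]; exact hrpos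
  · rw [Set.disjoint_left]
    intro z hz1 hz2
    have h1 : d x z < r := hz1
    have h2 : d z y < r := by rw [hd.symm]; exact hz2
    have : ε ≤ star r r := by
      calc ε ≤ star (d x z) (d z y) := hd.star_triangle x y z
        _ ≤ star r (d z y) :=
            ht.mono _ _ _ (hd.nonneg x z) hrpos.le (hd.nonneg z y) h1.le
        _ = star (d z y) r := ht.comm _ _ hrpos.le (hd.nonneg z y)
        _ ≤ star r r := ht.mono _ _ _ (hd.nonneg z y) hrpos.le hrpos.le h2.le
    exact absurd (lt_of_le_of_lt this hstar) (lt_irrefl ε)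
end

section
/- Let (X, d⋆) be a ⋆-metric space. Then the topological space (X, 𝒯_{d⋆}), where 𝒯_{d⋆} is the topology induced by the open balls of d⋆, is metrizable. -/
open Filter Uniformity in
theorem starMetric_metrizable {X : Type*} (star : ℝ → ℝ → ℝ) (d : X → X → ℝ)
    (ht : IsTDefiner star) (hd : IsStarMetric star d) :
    @TopologicalSpace.MetrizableSpace X (starTop d) := by
  classical
  -- Step 1: for every ε > 0 there is δ > 0 with star δ δ < ε.
  have key : ∀ ε > (0 : ℝ), ∃ δ > 0, star δ δ < ε := by
    intro ε hε
    have hb : (0 : ℝ) ≤ ε / 2 := by positivity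
    have h0 : star 0 (ε / 2) = ε / 2 := by
      rw [ht.comm 0 (ε / 2) le_rfl hb, ht.zero_id _ hb]
    have hc : ContinuousWithinAt (fun a => star a (ε / 2)) (Set.Ici 0) 0 :=
      ht.cont (ε / 2) hb 0 Set.self_mem_Ici
    have hmem : {a : ℝ | star a (ε / 2) < ε} ∈ nhdsWithin (0 : ℝ) (Set.Ici 0) := by
      have : star 0 (ε / 2) < ε := by rw [h0]; linarith
      exact hc (IsOpen.mem_nhds isOpen_Iio this)
    rw [Metric.mem_nhdsWithin_iff] at hmem
    obtain ⟨η, hη, hball⟩ := hmem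
    set δ := min (η / 2) (ε / 2) with hδdef
    have hδpos : 0 < δ := lt_min (by linarith) (by linarith)
    have hδball : δ ∈ Metric.ball (0 : ℝ) η ∩ Set.Ici 0 := by
      constructor
      · simp only [Metric.mem_ball, Real.dist_eq, sub_zero]
        rw [abs_of_nonneg hδpos.le]
        exact lt_of_le_of_lt (min_le_left _ _) (by linarith)
      · exact hδpos.le
    have h1 : star δ (ε / 2) < ε := hball hδball
    have h2 : star δ δ ≤ star δ (ε / 2) := by
      have := ht.mono δ (ε / 2) δ hδpos.le hb hδpos.le (min_le_right _ _)
      calc star δ δ = star δ δ := rfl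
        _ ≤ star (ε / 2) δ := this
        _ = star δ (ε / 2) := ht.comm _ _ hb hδpos.le
    exact ⟨δ, hδpos, lt_of_le_of_lt h2 h1⟩
  -- entourages
  set S : ℝ → Set (X × X) := fun ε => {p | d p.1 p.2 < ε} with hS
  have hSmono : ∀ {a b : ℝ}, a ≤ b → S a ⊆ S b := fun h p hp => lt_of_lt_of_le hp h
  set F : Filter (X × X) := ⨅ ε ∈ Set.Ioi (0 : ℝ), 𝓟 (S ε) with hF
  have hbasis : F.HasBasis (fun ε : ℝ => ε ∈ Set.Ioi (0 : ℝ)) S := by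
    rw [hF]
    refine Filter.hasBasis_biInf_principal ?_ ⟨1, Set.mem_Ioi.2 one_pos⟩
    intro a ha b hb
    exact ⟨min a b, Set.mem_Ioi.2 (lt_min ha hb),
      hSmono (min_le_left _ _), hSmono (min_le_right _ _)⟩
  -- the uniform space
  letI u : UniformSpace X := UniformSpace.ofCore <| UniformSpace.Core.mk' F
    (by
      intro r hr x
      obtain ⟨ε, hε, hsub⟩ := hbasis.mem_iff.1 hr
      exact hsub (show d x x < ε by
        rw [(hd.eq_zero_iff x x).2 rfl]; exact hε))
    (by
      intro r hr
      obtain ⟨ε, hε, hsub⟩ := hbasis.mem_iff.1 hr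
      refine Filter.mem_of_superset (hbasis.mem_of_mem hε) ?_
      intro p hp
      exact hsub (show d p.2 p.1 < ε by rw [hd.symm]; exact hp))
    (by
      intro r hr
      obtain ⟨ε, hε, hsub⟩ := hbasis.mem_iff.1 hr
      obtain ⟨δ, hδ, hδε⟩ := key ε hε
      refine ⟨S δ, hbasis.mem_of_mem hδ, ?_⟩
      rintro ⟨x, y⟩ ⟨z, hxz, hzy⟩
      refine hsub (show d x y < ε from ?_)
      have t1 : d x y ≤ star (d x z) (d z y) := hd.star_triangle x y z
      have t2 : star (d x z) (d z y) ≤ star δ (d z y) :=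
        ht.mono _ _ _ (hd.nonneg _ _) hδ.le (hd.nonneg _ _) hxz.le
      have t3 : star δ (d z y) ≤ star δ δ := by
        rw [ht.comm δ (d z y) hδ.le (hd.nonneg _ _)]
        exact le_trans (ht.mono _ _ _ (hd.nonneg _ _) hδ.le hδ.le hzy.le)
          (le_of_eq rfl)
      linarith)
  have huni : 𝓤 X = F := rfl
  -- the topology coincides with starTop d
  have htop : u.toTopologicalSpace = starTop d := by
    refine TopologicalSpace.ext ?_
    ext s
    rw [isOpen_uniformity]
    constructor
    · intro h a ha
      obtain ⟨ε, hε, hsub⟩ := hbasis.mem_iff.1 (huni ▸ h a ha)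
      exact ⟨ε, hε, fun x hx => hsub (show ((a, x) : X × X) ∈ S ε from hx) rfl⟩
    · intro h x hx
      obtain ⟨r, hr, hsub⟩ := h x hx
      rw [huni]
      refine Filter.mem_of_superset (hbasis.mem_of_mem hr) ?_
      rintro ⟨a, b⟩ hab rfl
      exact hsub hab
  -- countably generated uniformity
  haveI hcg : (𝓤 X).IsCountablyGenerated := by
    rw [huni]
    have hb2 : F.HasBasis (fun _ : ℕ => True) (fun n => S (1 / (n + 1))) := by
      refine hbasis.to_hasBasis ?_ ?_
      · intro ε hε
        obtain ⟨n, hn⟩ := exists_nat_one_div_lt (Set.mem_Ioi.1 hε)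
        exact ⟨n, trivial, hSmono hn.le⟩
      · intro n _
        exact ⟨1 / (n + 1), Set.mem_Ioi.2 (by positivity), subset_rfl⟩
    exact hb2.isCountablyGenerated
  -- T0
  haveI ht1 : @T1Space X (starTop d) := by
    refine @T1Space.mk X (starTop d) ?_
    intro x
    refine (@isOpen_compl_iff X {x} (starTop d)).1 ?_
    intro a ha
    have hax : a ≠ x := ha
    have hpos : 0 < d a x := by
      rcases lt_or_eq_of_le (hd.nonneg a x) with h | h
      · exact h
      · exact absurd ((hd.eq_zero_iff a x).1 h.symm) hax
    refine ⟨d a x, hpos, ?_⟩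
    intro y hy hyx
    rw [Set.mem_singleton_iff] at hyx
    have hy' : d a y < d a x := hy
    rw [hyx] at hy'
    exact lt_irrefl _ hy'
  haveI ht0 : T0Space X := by
    have : @T1Space X u.toTopologicalSpace := htop ▸ ht1
    exact @T1Space.t0Space X u.toTopologicalSpace this
  rw [← htop]
  exact UniformSpace.metrizableSpace
end

section
/- Let (X, d⋆) be a ⋆-metric space. If every infinite subset of X has an ω-accumulation point in the topology induced by d⋆, then (X, d⋆) is totally bounded. -/
lemma star_small_left {star : ℝ → ℝ → ℝ} (ht : IsTDefiner star) {b ε : ℝ}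
    (hb : 0 ≤ b) (hbε : b < ε) : ∃ δ > 0, ∀ t, 0 ≤ t → t < δ → star t b < ε := by
  have hc := (ht.cont b hb 0 (Set.self_mem_Ici)).tendsto
  have h0 : star 0 b = b := by rw [ht.comm 0 b le_rfl hb, ht.zero_id b hb]
  rw [h0] at hc
  have hmem : {a | star a b < ε} ∈ nhdsWithin (0:ℝ) (Set.Ici 0) :=
    hc (Iio_mem_nhds hbε)
  rw [Metric.mem_nhdsWithin_iff] at hmem
  obtain ⟨δ, hδ, hsub⟩ := hmem
  refine ⟨δ, hδ, fun t ht0 htδ => ?_⟩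
  exact hsub ⟨by simpa [Real.dist_eq, abs_of_nonneg ht0] using htδ, ht0⟩

theorem totallyBounded_of_omega_accumulation {X : Type*} (star : ℝ → ℝ → ℝ)
    (d : X → X → ℝ) (ht : IsTDefiner star) (hd : IsStarMetric star d)
    (h : ∀ A : Set X, A.Infinite →
      ∃ x : X, ∀ U : Set X, (starTop d).IsOpen U → x ∈ U → (U ∩ A).Infinite) :
    StarTotallyBounded d := by
  intro ε hε
  by_contra hne
  push_neg at hne
  classical
  -- choose a point far from any finite set
  choose c hcp using hne
  -- build an ε-separated sequence
  let g : ℕ → Finset X := fun n => Nat.rec ∅ (fun _ F => insert (c F) F) n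
  have hgsucc : ∀ n, g (n + 1) = insert (c (g n)) (g n) := fun n => rfl
  let seq : ℕ → X := fun n => c (g n)
  have hmono : ∀ m n, m ≤ n → g m ⊆ g n := by
    intro m n h
    induction h with
    | refl => exact subset_rfl
    | step h' ih => exact ih.trans (by rw [hgsucc]; exact Finset.subset_insert _ _)
  have hmemg : ∀ m n, m < n → seq m ∈ g n := by
    intro m n hmn
    have : seq m ∈ g (m + 1) := by rw [hgsucc]; exact Finset.mem_insert_self _ _
    exact hmono (m + 1) n hmn this
  have hsep : ∀ m n, m < n → ε ≤ d (seq m) (seq n) :=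
    fun m n hmn => hcp (g n) (seq m) (hmemg m n hmn)
  have hsep' : ∀ m n, m ≠ n → ε ≤ d (seq m) (seq n) := by
    intro m n hmn
    rcases lt_or_gt_of_ne hmn with h' | h'
    · exact hsep m n h'
    · rw [hd.symm]; exact hsep n m h'
  have hinj : Function.Injective seq := by
    intro m n hmn
    by_contra hne'
    have := hsep' m n hne'
    rw [hmn, (hd.eq_zero_iff _ _).mpr rfl] at this
    linarith
  have hA : (Set.range seq).Infinite := Set.infinite_range_of_injective hinj
  obtain ⟨x, hx⟩ := h _ hA
  -- find δ > 0 with star δ δ < ε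
  obtain ⟨δ', hδ', hδ'p⟩ := star_small_left ht (le_of_lt (half_pos hε)) (half_lt_self hε)
  set δ : ℝ := min (δ' / 2) (ε / 2) with hδdef
  have hδpos : 0 < δ := lt_min (half_pos hδ') (half_pos hε)
  have hδle : δ ≤ ε / 2 := min_le_right _ _
  have hstarδ : star δ δ < ε := by
    calc star δ δ ≤ star (ε / 2) δ :=
          ht.mono δ (ε / 2) δ hδpos.le (half_pos hε).le hδpos.le hδle
      _ = star δ (ε / 2) := ht.comm _ _ (half_pos hε).le hδpos.le
      _ < ε := hδ'p δ hδpos.le (lt_of_le_of_lt (min_le_left _ _) (half_lt_self hδ'))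
  -- the ball around x of radius δ is open
  set U : Set X := {z | d x z < δ} with hUdef
  have hUopen : (starTop d).IsOpen U := by
    intro a ha
    have hs : d x a < δ := ha
    obtain ⟨r, hr, hrp⟩ := star_small_left ht (hd.nonneg x a) hs
    refine ⟨r, hr, fun z hz => ?_⟩
    have : d x z ≤ star (d x a) (d a z) := hd.star_triangle x z a
    have h2 : star (d x a) (d a z) = star (d a z) (d x a) :=
      ht.comm _ _ (hd.nonneg _ _) (hd.nonneg _ _)
    have h3 : star (d a z) (d x a) < δ := hrp _ (hd.nonneg _ _) hz
    exact lt_of_le_of_lt (this.trans_eq h2) h3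
  have hxU : x ∈ U := by
    show d x x < δ
    rw [(hd.eq_zero_iff x x).mpr rfl]; exact hδpos
  have hinf := hx U hUopen hxU
  obtain ⟨a, ha, b, hb, hab⟩ := hinf.nontrivial
  obtain ⟨m, rfl⟩ := ha.2
  obtain ⟨n, rfl⟩ := hb.2
  have hmn : m ≠ n := fun h' => hab (by rw [h'])
  have h1 : ε ≤ d (seq m) (seq n) := hsep' m n hmn
  have h2 : d (seq m) (seq n) ≤ star (d (seq m) x) (d x (seq n)) :=
    hd.star_triangle _ _ x
  have hdm : d (seq m) x < δ := by rw [hd.symm]; exact ha.1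
  have hdn : d x (seq n) < δ := hb.1
  have h3 : star (d (seq m) x) (d x (seq n)) ≤ star δ δ := by
    calc star (d (seq m) x) (d x (seq n)) ≤ star δ (d x (seq n)) :=
          ht.mono _ _ _ (hd.nonneg _ _) hδpos.le (hd.nonneg _ _) hdm.le
      _ = star (d x (seq n)) δ := ht.comm _ _ hδpos.le (hd.nonneg _ _)
      _ ≤ star δ δ := ht.mono _ _ _ (hd.nonneg _ _) hδpos.le hδpos.le hdn.le
  linarith
end

section
/- Let (X, d⋆) be a ⋆-metric space and M ⊆ X. Then (M, d⋆) is totally bounded if and only if (cl(M), d⋆) is totally bounded, where cl(M) is the closure of M in the topology induced by d⋆. -/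
/-- Small-ball lemma: values of `star` near `(0,0)` are small. -/
lemma star_small {star : ℝ → ℝ → ℝ} (ht : IsTDefiner star) {ε : ℝ} (hε : 0 < ε) :
    ∃ t > 0, ∃ t' > 0, ∀ a b, 0 ≤ a → 0 ≤ b → a ≤ t → b ≤ t' → star a b < ε := by
  have hε2 : (0:ℝ) ≤ ε / 2 := by positivity
  have hc : ContinuousWithinAt (fun a => star a (ε/2)) (Set.Ici 0) 0 :=
    (ht.cont (ε/2) hε2) 0 (Set.mem_Ici.mpr le_rfl)
  have h0 : star 0 (ε/2) = ε/2 := by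
    rw [ht.comm 0 (ε/2) le_rfl hε2, ht.zero_id _ hε2]
  have hev : ∀ᶠ a in nhdsWithin 0 (Set.Ici 0), star a (ε/2) < ε := by
    have : Set.Iio ε ∈ nhds (star 0 (ε/2)) := by
      apply Iio_mem_nhds; rw [h0]; linarith
    exact hc this
  rw [Filter.eventually_iff, Metric.mem_nhdsWithin_iff] at hev
  obtain ⟨δ, hδ, h⟩ := hev
  refine ⟨δ/2, by positivity, ε/2, by positivity, fun a b ha hb hat hbt => ?_⟩
  have h1 : star a (ε/2) < ε := h ⟨by
      rw [Metric.mem_ball, Real.dist_eq, sub_zero, abs_of_nonneg ha]; linarith, ha⟩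
  calc star a b = star b a := ht.comm a b ha hb
    _ ≤ star (ε/2) a := ht.mono b (ε/2) a hb hε2 ha hbt
    _ = star a (ε/2) := ht.comm (ε/2) a hε2 ha
    _ < ε := h1

/-- Points of the closure are approximable by points of `M`. -/
lemma closure_approx {X : Type*} {star : ℝ → ℝ → ℝ} {d : X → X → ℝ}
    (ht : IsTDefiner star) (hd : IsStarMetric star d) (M : Set X) {x : X}
    (hx : x ∈ @closure X (starTop d) M) : ∀ r > 0, ∃ m ∈ M, d x m < r := by
  letI : TopologicalSpace X := starTop d
  intro r hr
  by_contra hcon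
  push_neg at hcon
  set U : Set X := {y | ∃ s > 0, ∀ z, d y z < s → d x z < r} with hU
  have hUopen : (starTop d).IsOpen U := by
    intro y hy
    obtain ⟨s, hs, hsy⟩ := hy
    obtain ⟨t, htpos, t', ht'pos, hkey⟩ := star_small ht hs
    refine ⟨t, htpos, fun z hz => ?_⟩
    refine ⟨t', ht'pos, fun w hw => ?_⟩
    apply hsy
    calc d y w ≤ star (d y z) (d z w) := hd.star_triangle y w z
      _ < s := hkey _ _ (hd.nonneg _ _) (hd.nonneg _ _) (le_of_lt hz) (le_of_lt hw)
  have hMcompl : M ⊆ Uᶜ := by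
    intro m hm hmU
    obtain ⟨s, hs, hsy⟩ := hmU
    have : d x m < r := hsy m (by rw [(hd.eq_zero_iff m m).mpr rfl]; exact hs)
    exact absurd this (not_lt.mpr (hcon m hm))
  have hclosed : IsClosed Uᶜ := by
    rw [isClosed_compl_iff]
    exact hUopen
  have := closure_minimal hMcompl hclosed hx
  exact this ⟨r, hr, fun z hz => hz⟩

theorem totallyBounded_iff_closure {X : Type*} (star : ℝ → ℝ → ℝ) (d : X → X → ℝ)
    (ht : IsTDefiner star) (hd : IsStarMetric star d) (M : Set X) :
    StarTotallyBoundedOn d M ↔ StarTotallyBoundedOn d (@closure X (starTop d) M) := by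
  classical
  letI : TopologicalSpace X := starTop d
  constructor
  · intro hTB ε hε
    obtain ⟨t, htpos, t', ht'pos, hkey⟩ := star_small ht hε
    obtain ⟨F, hFM, hF⟩ := hTB t htpos
    refine ⟨F, hFM.trans ((subset_closure (s := M))), fun x hx => ?_⟩
    obtain ⟨m, hm, hxm⟩ := closure_approx ht hd M hx t' ht'pos
    obtain ⟨y, hy, hym⟩ := hF m hm
    refine ⟨y, hy, ?_⟩
    calc d y x ≤ star (d y m) (d m x) := hd.star_triangle y x m
      _ < ε := hkey _ _ (hd.nonneg _ _) (hd.nonneg _ _) (le_of_lt hym)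
          (le_of_lt (by rw [hd.symm]; exact hxm))
  · intro hTB ε hε
    obtain ⟨t, htpos, t', ht'pos, hkey⟩ := star_small ht hε
    obtain ⟨F, hFcl, hF⟩ := hTB t' ht'pos
    have hchoice : ∀ y : X, ∃ m : X, y ∈ F → m ∈ M ∧ d y m < t := by
      intro y
      by_cases hy : y ∈ F
      · obtain ⟨m, hm, hym⟩ := closure_approx ht hd M (hFcl hy) t htpos
        exact ⟨m, fun _ => ⟨hm, hym⟩⟩
      · exact ⟨y, fun h => absurd h hy⟩
    choose g hg using hchoice
    refine ⟨F.image g, ?_, fun x hx => ?_⟩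
    · intro m hm
      simp only [Finset.coe_image, Set.mem_image, Finset.mem_coe] at hm
      obtain ⟨y, hy, rfl⟩ := hm
      exact (hg y hy).1
    · obtain ⟨y, hy, hyx⟩ := hF x ((subset_closure (s := M)) hx)
      refine ⟨g y, Finset.mem_image_of_mem g hy, ?_⟩
      calc d (g y) x ≤ star (d (g y) y) (d y x) := hd.star_triangle _ x y
        _ < ε := hkey _ _ (hd.nonneg _ _) (hd.nonneg _ _)
            (le_of_lt (by rw [hd.symm]; exact (hg y hy).2)) (le_of_lt hyx)
end

section
/- Let (X₁,d₁⋆),…,(Xₙ,dₙ⋆) be ⋆-metric spaces over the same t-definer ⋆, and let X = ∏ᵢ Xᵢ with d_T⋆(x,y) = d₁⋆(x₁,y₁) ⋆ ⋯ ⋆ dₙ⋆(xₙ,yₙ). Then (X, d_T⋆) is totally bounded if and only if every (Xᵢ, dᵢ⋆) is totally bounded. -/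
section Aux

variable {star : ℝ → ℝ → ℝ}

lemma tdef_fold_nonneg (ht : IsTDefiner star) :
    ∀ (l : List ℝ), (∀ a ∈ l, 0 ≤ a) → 0 ≤ l.foldr star 0
  | [], _ => le_refl 0
  | a :: l, h => ht.nonneg _ _ (h a List.mem_cons_self)
      (tdef_fold_nonneg ht l fun b hb => h b (List.mem_cons_of_mem _ hb))

lemma tdef_foldFn_nonneg (ht : IsTDefiner star) {k : ℕ} (f : Fin k → ℝ)
    (hf : ∀ i, 0 ≤ f i) : 0 ≤ (List.ofFn f).foldr star 0 := by
  apply tdef_fold_nonneg ht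
  intro a ha
  obtain ⟨i, rfl⟩ := List.mem_ofFn.1 ha
  exact hf i

lemma tdef_mono₂ (ht : IsTDefiner star) (a b c : ℝ) (ha : 0 ≤ a) (hb : 0 ≤ b)
    (hc : 0 ≤ c) (hbc : b ≤ c) : star a b ≤ star a c := by
  rw [ht.comm a b ha hb, ht.comm a c ha hc]
  exact ht.mono b c a hb hc ha hbc

lemma tdef_foldFn_mono (ht : IsTDefiner star) :
    ∀ (k : ℕ) (f g : Fin k → ℝ), (∀ i, 0 ≤ f i) → (∀ i, 0 ≤ g i) →
      (∀ i, f i ≤ g i) → (List.ofFn f).foldr star 0 ≤ (List.ofFn g).foldr star 0 := by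
  intro k
  induction k with
  | zero => intro f g _ _ _; simp
  | succ k ih =>
    intro f g hf hg hfg
    rw [List.ofFn_succ, List.ofFn_succ, List.foldr_cons, List.foldr_cons]
    have h1 : 0 ≤ (List.ofFn fun i : Fin k => f i.succ).foldr star 0 :=
      tdef_foldFn_nonneg ht _ fun i => hf i.succ
    have h2 : 0 ≤ (List.ofFn fun i : Fin k => g i.succ).foldr star 0 :=
      tdef_foldFn_nonneg ht _ fun i => hg i.succ
    calc star (f 0) ((List.ofFn fun i : Fin k => f i.succ).foldr star 0)
        ≤ star (f 0) ((List.ofFn fun i : Fin k => g i.succ).foldr star 0) :=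
          tdef_mono₂ ht _ _ _ (hf 0) h1 h2
            (ih _ _ (fun i => hf i.succ) (fun i => hg i.succ) (fun i => hfg i.succ))
      _ ≤ star (g 0) _ := ht.mono _ _ _ (hf 0) (hg 0) h2 (hfg 0)

lemma tdef_le_foldFn (ht : IsTDefiner star) :
    ∀ (k : ℕ) (f : Fin k → ℝ), (∀ i, 0 ≤ f i) →
      ∀ i, f i ≤ (List.ofFn f).foldr star 0 := by
  intro k
  induction k with
  | zero => intro f _ i; exact absurd i.2 (by simp)
  | succ k ih =>
    intro f hf i
    rw [List.ofFn_succ, List.foldr_cons]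
    have h1 : 0 ≤ (List.ofFn fun j : Fin k => f j.succ).foldr star 0 :=
      tdef_foldFn_nonneg ht _ fun j => hf j.succ
    rcases Fin.eq_zero_or_eq_succ i with rfl | ⟨j, rfl⟩
    · calc f 0 = star (f 0) 0 := (ht.zero_id _ (hf 0)).symm
        _ ≤ star (f 0) _ := tdef_mono₂ ht _ _ _ (hf 0) le_rfl h1 h1
    · calc f j.succ ≤ (List.ofFn fun i : Fin k => f i.succ).foldr star 0 :=
          ih _ (fun j => hf j.succ) j
        _ = star 0 _ := by
            rw [ht.comm 0 _ le_rfl h1, ht.zero_id _ h1]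
        _ ≤ star (f 0) _ := ht.mono _ _ _ le_rfl (hf 0) h1 (hf 0)

lemma tdef_exists_star_lt (ht : IsTDefiner star) (c ε : ℝ) (hc : 0 ≤ c)
    (hce : c < ε) : ∃ δ > 0, star δ c < ε := by
  have h0 : star 0 c = c := by rw [ht.comm 0 c le_rfl hc, ht.zero_id c hc]
  have hcont := (ht.cont c hc) 0 Set.self_mem_Ici
  have htend : Filter.Tendsto (fun a => star a c) (nhdsWithin 0 (Set.Ici 0)) (nhds c) := by
    simpa [ContinuousWithinAt, h0] using hcont
  have hev : ∀ᶠ a in nhdsWithin 0 (Set.Ici 0), star a c < ε :=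
    htend.eventually (eventually_lt_nhds hce)
  obtain ⟨u, hu, hsub⟩ := mem_nhdsGE_iff_exists_Ico_subset.1 hev
  have hu' : 0 < u := Set.mem_Ioi.1 hu
  exact ⟨u / 2, by positivity, hsub ⟨by positivity, by linarith⟩⟩

lemma tdef_exists_delta (ht : IsTDefiner star) :
    ∀ (k : ℕ) (ε : ℝ), 0 < ε →
      ∃ δ > 0, (List.ofFn fun _ : Fin k => δ).foldr star 0 < ε := by
  intro k
  induction k with
  | zero => intro ε hε; exact ⟨1, one_pos, by simpa using hε⟩
  | succ k ih =>
    intro ε hε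
    obtain ⟨δ₁, hδ₁, h1⟩ := ih (ε / 2) (by positivity)
    obtain ⟨δ₀, hδ₀, h0⟩ := tdef_exists_star_lt ht (ε / 2) ε (by positivity) (by linarith)
    refine ⟨min δ₀ δ₁, lt_min hδ₀ hδ₁, ?_⟩
    rw [List.ofFn_succ, List.foldr_cons]
    have hmnn : (0:ℝ) ≤ min δ₀ δ₁ := le_of_lt (lt_min hδ₀ hδ₁)
    have hfoldm : 0 ≤ (List.ofFn fun _ : Fin k => min δ₀ δ₁).foldr star 0 :=
      tdef_foldFn_nonneg ht _ fun _ => hmnn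
    have hfold1 : 0 ≤ (List.ofFn fun _ : Fin k => δ₁).foldr star 0 :=
      tdef_foldFn_nonneg ht _ fun _ => le_of_lt hδ₁
    calc star (min δ₀ δ₁) ((List.ofFn fun _ : Fin k => min δ₀ δ₁).foldr star 0)
        ≤ star (min δ₀ δ₁) ((List.ofFn fun _ : Fin k => δ₁).foldr star 0) :=
          tdef_mono₂ ht _ _ _ hmnn hfoldm hfold1
            (tdef_foldFn_mono ht k _ _ (fun _ => hmnn) (fun _ => le_of_lt hδ₁)
              (fun _ => min_le_right _ _))
      _ ≤ star (min δ₀ δ₁) (ε / 2) :=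
          tdef_mono₂ ht _ _ _ hmnn hfold1 (by positivity) (le_of_lt h1)
      _ ≤ star δ₀ (ε / 2) :=
          ht.mono _ _ _ hmnn (le_of_lt hδ₀) (by positivity) (min_le_left _ _)
      _ < ε := h0

end Aux

theorem totallyBounded_prod_starSum {n : ℕ} (X : Fin n → Type*) [∀ i, Nonempty (X i)]
    (star : ℝ → ℝ → ℝ) (d : ∀ i, X i → X i → ℝ)
    (ht : IsTDefiner star) (hd : ∀ i, IsStarMetric star (d i)) :
    StarTotallyBounded
      (fun x y : ∀ i, X i => (List.ofFn fun i => d i (x i) (y i)).foldr star 0) ↔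
    ∀ i, StarTotallyBounded (d i) := by
  classical
  constructor
  · intro h i ε hε
    obtain ⟨F, hF⟩ := h ε hε
    refine ⟨F.image (fun y => y i), ?_⟩
    intro x
    set xh : ∀ j, X j := Function.update (fun j => Classical.arbitrary (X j)) i x with hxh
    obtain ⟨y, hyF, hyd⟩ := hF xh
    refine ⟨y i, Finset.mem_image_of_mem _ hyF, ?_⟩
    have hle : d i (y i) (xh i) ≤ (List.ofFn fun j => d j (y j) (xh j)).foldr star 0 :=
      tdef_le_foldFn ht n _ (fun j => (hd j).nonneg _ _) i
    have : xh i = x := Function.update_self i x _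
    rw [this] at hle
    exact lt_of_le_of_lt hle hyd
  · intro h ε hε
    obtain ⟨δ, hδ, hfold⟩ := tdef_exists_delta ht n ε hε
    choose Fi hFi using fun i => h i δ hδ
    classical
    refine ⟨Fintype.piFinset Fi, ?_⟩
    intro x
    choose g hg1 hg2 using fun i => hFi i (x i)
    refine ⟨g, Fintype.mem_piFinset.2 hg1, ?_⟩
    calc (List.ofFn fun i => d i (g i) (x i)).foldr star 0
        ≤ (List.ofFn fun _ : Fin n => δ).foldr star 0 :=
          tdef_foldFn_mono ht n _ _ (fun i => (hd i).nonneg _ _)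
            (fun _ => le_of_lt hδ) (fun i => le_of_lt (hg2 i))
      _ < ε := hfold
end

section
/- Let (X, d⋆) be a ⋆-metric space and A ⊆ X. Define D(x, A) = inf_{y∈A} d⋆(x,y) for nonempty A. Then the closure of A in the topology induced by d⋆ equals {x ∈ X : D(x, A) = 0}. -/
theorem closure_eq_zero_distance {X : Type*} (star : ℝ → ℝ → ℝ) (d : X → X → ℝ)
    (ht : IsTDefiner star) (hd : IsStarMetric star d) (A : Set X) (hA : A.Nonempty) :
    @closure X (starTop d) A = {x | sInf ((fun y => d x y) '' A) = 0} := by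
  classical
  letI : TopologicalSpace X := starTop d
  set S : Set X := {x | sInf ((fun y => d x y) '' A) = 0} with hS
  have hbdd : ∀ x : X, BddBelow ((fun y => d x y) '' A) := by
    intro x
    exact ⟨0, fun r hr => by obtain ⟨y, _, rfl⟩ := hr; exact hd.nonneg x y⟩
  have hne : ∀ x : X, ((fun y => d x y) '' A).Nonempty := fun x => hA.image _
  have hinf_nonneg : ∀ x : X, 0 ≤ sInf ((fun y => d x y) '' A) := by
    intro x
    exact le_csInf (hne x) (fun r hr => by obtain ⟨y, _, rfl⟩ := hr; exact hd.nonneg x y)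
  have hAS : A ⊆ S := by
    intro x hx
    have h1 : sInf ((fun y => d x y) '' A) ≤ 0 := by
      have : d x x ∈ (fun y => d x y) '' A := ⟨x, hx, rfl⟩
      have := csInf_le (hbdd x) this
      rwa [(hd.eq_zero_iff x x).mpr rfl] at this
    exact le_antisymm h1 (hinf_nonneg x)
  have hSclosed : IsClosed S := by
    rw [← isOpen_compl_iff]
    show ∀ a ∈ Sᶜ, ∃ r > 0, {x | d a x < r} ⊆ Sᶜ
    intro a ha
    have hc : 0 < sInf ((fun y => d a y) '' A) :=
      lt_of_le_of_ne (hinf_nonneg a) (Ne.symm ha)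
    set c := sInf ((fun y => d a y) '' A) with hcdef
    -- continuity of star at 0 in first argument
    have hcont : ContinuousWithinAt (fun t => star t (c / 2)) (Set.Ici 0) 0 :=
      (ht.cont (c / 2) (by linarith)) 0 (by exact Set.self_mem_Ici)
    have hval : star 0 (c / 2) = c / 2 := by
      rw [ht.comm 0 (c / 2) le_rfl (by linarith), ht.zero_id (c / 2) (by linarith)]
    have hev : ∀ᶠ t in nhdsWithin 0 (Set.Ici 0), star t (c / 2) < c := by
      have : Set.Iio c ∈ nhds (star 0 (c / 2)) := by
        apply Iio_mem_nhds; rw [hval]; linarith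
      exact hcont this
    obtain ⟨δ, hδpos, hδ⟩ := Metric.mem_nhdsWithin_iff.mp hev
    refine ⟨δ, hδpos, fun z hz => ?_⟩
    intro hzS
    -- z ∈ S means inf d z A = 0 < c/2, so there is y ∈ A with d z y < c/2
    have hz0 : sInf ((fun y => d z y) '' A) = 0 := hzS
    have : sInf ((fun y => d z y) '' A) < c / 2 := by rw [hz0]; linarith
    obtain ⟨r, hrmem, hrlt⟩ := (csInf_lt_iff (hbdd z) (hne z)).mp this
    obtain ⟨y, hyA, rfl⟩ := hrmem
    -- triangle: d a y ≤ star (d a z) (d z y) ≤ star (d a z) (c/2) < c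
    have hdaz : (0:ℝ) ≤ d a z := hd.nonneg a z
    have hdzy : (0:ℝ) ≤ d z y := hd.nonneg z y
    have htri : d a y ≤ star (d a z) (d z y) := hd.star_triangle a y z
    have h1 : star (d a z) (d z y) = star (d z y) (d a z) := ht.comm _ _ hdaz hdzy
    have h2 : star (d z y) (d a z) ≤ star (c / 2) (d a z) :=
      ht.mono _ _ _ hdzy (by linarith) hdaz (le_of_lt hrlt)
    have h3 : star (c / 2) (d a z) = star (d a z) (c / 2) :=
      ht.comm _ _ (by linarith) hdaz
    have h4 : star (d a z) (c / 2) < c := by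
      apply hδ
      constructor
      · simp [Real.dist_eq, abs_of_nonneg hdaz]
        exact hz
      · exact hdaz
    have hcle : c ≤ d a y := csInf_le (hbdd a) ⟨y, hyA, rfl⟩
    linarith [htri, h1 ▸ htri]
  apply Set.Subset.antisymm
  · exact closure_minimal hAS hSclosed
  · intro x hx
    rw [mem_closure_iff]
    intro o ho hxo
    obtain ⟨r, hr, hball⟩ := ho x hxo
    have : sInf ((fun y => d x y) '' A) < r := by
      have hx0 : sInf ((fun y => d x y) '' A) = 0 := hx
      rw [hx0]; exact hr
    obtain ⟨t, htmem, htlt⟩ := (csInf_lt_iff (hbdd x) (hne x)).mp this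
    obtain ⟨y, hyA, rfl⟩ := htmem
    exact ⟨y, hball htlt, hyA⟩
end

section
/- A ⋆-metric space (X, d⋆) is complete if and only if for every decreasing sequence F₁ ⊇ F₂ ⊇ F₃ ⊇ … of nonempty closed subsets of X with diam(Fₙ) → 0, the intersection ⋂ₙ Fₙ is a singleton. (Cantor's theorem for ⋆-metric spaces.) -/
/-- From continuity of the t-definer at 0, small inputs give small outputs. -/
lemma tdefiner_small {star : ℝ → ℝ → ℝ} (ht : IsTDefiner star) :
    ∀ ε > (0:ℝ), ∃ δ > (0:ℝ), ∀ a b, 0 ≤ a → 0 ≤ b → a < δ → b < δ → star a b < ε := by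
  intro ε hε
  set c : ℝ := ε / 2 with hc
  have hc0 : 0 < c := by positivity
  have hcε : c < ε := by simp [hc]; linarith
  have hf0 : star 0 c = c := by
    rw [ht.comm 0 c le_rfl hc0.le, ht.zero_id c hc0.le]
  have hcont : Filter.Tendsto (fun a => star a c) (nhdsWithin 0 (Set.Ici (0:ℝ)))
      (nhds (star 0 c)) := ht.cont c hc0.le 0 (Set.self_mem_Ici)
  have hev : ∀ᶠ a in nhdsWithin 0 (Set.Ici (0:ℝ)), star a c < ε := by
    have : Set.Iio ε ∈ nhds (star 0 c) := by
      rw [hf0]; exact Iio_mem_nhds hcε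
    exact hcont this
  rw [Filter.eventually_iff, Metric.mem_nhdsWithin_iff] at hev
  obtain ⟨δ, hδ, hball⟩ := hev
  refine ⟨min δ c, lt_min hδ hc0, fun a b ha hb haδ hbδ => ?_⟩
  have haδ' : a < δ := lt_of_lt_of_le haδ (min_le_left _ _)
  have hbc : b ≤ c := le_of_lt (lt_of_lt_of_le hbδ (min_le_right _ _))
  have hstep : star a b ≤ star a c := by
    rw [ht.comm a b ha hb, ht.comm a c ha hc0.le]
    exact ht.mono b c a hb hc0.le ha hbc
  have hmem : a ∈ Metric.ball (0:ℝ) δ ∩ Set.Ici 0 := by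
    constructor
    · simp [Real.dist_eq, abs_of_nonneg ha, haδ']
    · exact ha
  exact lt_of_le_of_lt hstep (hball hmem)

/-- Characterization of closure in the ⋆-metric topology. -/
lemma starTop_mem_closure_iff {X : Type*} {star : ℝ → ℝ → ℝ} {d : X → X → ℝ}
    (ht : IsTDefiner star) (hd : IsStarMetric star d) (S : Set X) (a : X) :
    a ∈ @closure X (starTop d) S ↔ ∀ r > (0:ℝ), ∃ s ∈ S, d a s < r := by
  letI : TopologicalSpace X := starTop d
  rw [mem_closure_iff]
  constructor
  · intro h r hr
    set U : Set X := {b | ∃ ρ > (0:ℝ), ∀ y, d b y < ρ → d a y < r} with hU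
    have hUopen : IsOpen U := by
      intro b hb
      obtain ⟨ρ, hρ, hb'⟩ := hb
      obtain ⟨δ, hδ, hsmall⟩ := tdefiner_small ht ρ hρ
      refine ⟨δ, hδ, fun c hc => ?_⟩
      refine ⟨δ, hδ, fun y hy => ?_⟩
      have : d b y ≤ star (d b c) (d c y) := hd.star_triangle b y c
      have hlt : star (d b c) (d c y) < ρ :=
        hsmall _ _ (hd.nonneg _ _) (hd.nonneg _ _) hc hy
      exact hb' y (lt_of_le_of_lt this hlt)
    have haU : a ∈ U := ⟨r, hr, fun y hy => hy⟩
    obtain ⟨s, hsU, hsS⟩ := h U hUopen haU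
    obtain ⟨ρ, hρ, hs'⟩ := hsU
    have : d s s < ρ := by
      rw [(hd.eq_zero_iff s s).mpr rfl]; exact hρ
    exact ⟨s, hsS, hs' s this⟩
  · intro h U hUopen haU
    obtain ⟨r, hr, hball⟩ := hUopen a haU
    obtain ⟨s, hsS, hs⟩ := h r hr
    exact ⟨s, hball hs, hsS⟩

theorem cantor_characterization_complete {X : Type*} (star : ℝ → ℝ → ℝ)
    (d : X → X → ℝ) (ht : IsTDefiner star) (hd : IsStarMetric star d) :
    StarComplete d ↔
      ∀ F : ℕ → Set X, (∀ n, (F n).Nonempty) →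
        (∀ n, @IsClosed X (starTop d) (F n)) → (∀ n, F (n + 1) ⊆ F n) →
        (∀ ε > (0:ℝ), ∃ k, ∀ n ≥ k, ∀ x ∈ F n, ∀ y ∈ F n, d x y < ε) →
        ∃ x₀ : X, ⋂ n, F n = {x₀} := by
  constructor
  · -- complete → Cantor
    intro hcomp F hne hcl hdec hdiam
    letI : TopologicalSpace X := starTop d
    have hanti : ∀ m n, m ≤ n → F n ⊆ F m := by
      intro m n hmn
      induction hmn with
      | refl => exact fun _ h => h
      | step h ih => exact fun y hy => (by exact ih (hdec _ hy))
    choose x hx using hne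
    have hcauchy : StarCauchy d x := by
      intro ε hε
      obtain ⟨k, hk⟩ := hdiam ε hε
      exact ⟨k, fun m hm n hn =>
        hk k le_rfl _ (hanti k m hm (hx m)) _ (hanti k n hn (hx n))⟩
    obtain ⟨x₀, hconv⟩ := hcomp x hcauchy
    have hx₀ : ∀ n, x₀ ∈ F n := by
      intro n
      have hcl' : closure (F n) = F n := (hcl n).closure_eq
      rw [← hcl', show closure (F n) = @closure X (starTop d) (F n) from rfl,
        starTop_mem_closure_iff ht hd]
      intro r hr
      obtain ⟨k, hk⟩ := hconv r hr
      refine ⟨x (max n k), hanti n _ (le_max_left _ _) (hx _), ?_⟩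
      rw [hd.symm]
      exact hk _ (le_max_right _ _)
    refine ⟨x₀, Set.eq_singleton_iff_unique_mem.mpr ⟨Set.mem_iInter.mpr hx₀, ?_⟩⟩
    intro y hy
    rw [Set.mem_iInter] at hy
    have hzero : d y x₀ = 0 := by
      by_contra h
      have hpos : 0 < d y x₀ := lt_of_le_of_ne (hd.nonneg y x₀) (Ne.symm h)
      obtain ⟨k, hk⟩ := hdiam _ hpos
      exact absurd (hk k le_rfl y (hy k) x₀ (hx₀ k)) (lt_irrefl _)
    exact (hd.eq_zero_iff y x₀).mp hzero
  · -- Cantor → complete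
    intro hcantor x hx
    letI : TopologicalSpace X := starTop d
    set T : ℕ → Set X := fun n => {y | ∃ m ≥ n, y = x m} with hT
    set F : ℕ → Set X := fun n => closure (T n) with hF
    have hxT : ∀ n, x n ∈ T n := fun n => ⟨n, le_rfl, rfl⟩
    have hsub : ∀ n, T n ⊆ F n := fun n => subset_closure
    have hne : ∀ n, (F n).Nonempty := fun n => ⟨x n, hsub n (hxT n)⟩
    have hcl : ∀ n, @IsClosed X (starTop d) (F n) := fun n => isClosed_closure
    have hdec : ∀ n, F (n + 1) ⊆ F n := by
      intro n
      apply closure_mono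
      rintro y ⟨m, hm, rfl⟩
      exact ⟨m, le_trans (Nat.le_succ n) hm, rfl⟩
    have hdiam : ∀ ε > (0:ℝ), ∃ k, ∀ n ≥ k, ∀ a ∈ F n, ∀ b ∈ F n, d a b < ε := by
      intro ε hε
      obtain ⟨δ₁, hδ₁, h1⟩ := tdefiner_small ht ε hε
      obtain ⟨δ₂', hδ₂', h2'⟩ := tdefiner_small ht δ₁ hδ₁
      set δ₂ : ℝ := min δ₂' δ₁ with hδ₂def
      have hδ₂ : 0 < δ₂ := lt_min hδ₂' hδ₁
      have h2 : ∀ a b, 0 ≤ a → 0 ≤ b → a < δ₂ → b < δ₂ → star a b < δ₁ :=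
        fun a b ha hb h h' => h2' a b ha hb (lt_of_lt_of_le h (min_le_left _ _))
          (lt_of_lt_of_le h' (min_le_left _ _))
      obtain ⟨k, hk⟩ := hx δ₂ hδ₂
      refine ⟨k, fun n hn a ha b hb => ?_⟩
      rw [starTop_mem_closure_iff ht hd] at ha hb
      obtain ⟨sa, ⟨ma, hma, rfl⟩, hsa⟩ := ha δ₂ hδ₂
      obtain ⟨sb, ⟨mb, hmb, rfl⟩, hsb⟩ := hb δ₂ hδ₂
      have htri : d a b ≤ star (d a (x ma)) (star (d (x ma) (x mb)) (d (x mb) b)) := by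
        calc d a b ≤ star (d a (x ma)) (d (x ma) b) := hd.star_triangle a b (x ma)
          _ ≤ star (d a (x ma)) (star (d (x ma) (x mb)) (d (x mb) b)) := by
              rw [ht.comm (d a (x ma)) (d (x ma) b) (hd.nonneg _ _) (hd.nonneg _ _),
                ht.comm (d a (x ma)) _ (hd.nonneg _ _)
                  (ht.nonneg _ _ (hd.nonneg _ _) (hd.nonneg _ _))]
              exact ht.mono _ _ _ (hd.nonneg _ _)
                (ht.nonneg _ _ (hd.nonneg _ _) (hd.nonneg _ _)) (hd.nonneg _ _)
                (hd.star_triangle (x ma) b (x mb))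
      have hmm : d (x ma) (x mb) < δ₂ := hk ma (le_trans hn hma) mb (le_trans hn hmb)
      have hbb : d (x mb) b < δ₂ := by rw [hd.symm]; exact hsb
      have hinner : star (d (x ma) (x mb)) (d (x mb) b) < δ₁ :=
        h2 _ _ (hd.nonneg _ _) (hd.nonneg _ _) hmm hbb
      have houter : star (d a (x ma)) (star (d (x ma) (x mb)) (d (x mb) b)) < ε :=
        h1 _ _ (hd.nonneg _ _) (ht.nonneg _ _ (hd.nonneg _ _) (hd.nonneg _ _))
          (lt_of_lt_of_le hsa (min_le_right _ _)) hinner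
      exact lt_of_le_of_lt htri houter
    obtain ⟨x₀, hx₀⟩ := hcantor F hne hcl hdec hdiam
    have hx₀mem : ∀ n, x₀ ∈ F n := by
      intro n
      have : x₀ ∈ ⋂ n, F n := hx₀ ▸ rfl
      exact Set.mem_iInter.mp this n
    refine ⟨x₀, fun ε hε => ?_⟩
    obtain ⟨k, hk⟩ := hdiam ε hε
    exact ⟨k, fun n hn => hk n hn _ (hsub n (hxT n)) x₀ (hx₀mem n)⟩
end

section
/- Let (X₁,d₁⋆),…,(Xₙ,dₙ⋆) be ⋆-metric spaces over the same t-definer and X = ∏ᵢ Xᵢ with d_T⋆(x,y) = d₁⋆(x₁,y₁) ⋆ ⋯ ⋆ dₙ⋆(xₙ,yₙ). Then (X, d_T⋆) is complete if and only if every (Xᵢ, dᵢ⋆) is complete. -/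
section Aux
variable {star : ℝ → ℝ → ℝ}

lemma star_mono_right (ht : IsTDefiner star) {a b c : ℝ} (ha : 0 ≤ a) (hb : 0 ≤ b)
    (hc : 0 ≤ c) (h : b ≤ c) : star a b ≤ star a c := by
  rw [ht.comm a b ha hb, ht.comm a c ha hc]
  exact ht.mono b c a hb hc ha h

lemma fold_nonneg (ht : IsTDefiner star) :
    ∀ l : List ℝ, (∀ a ∈ l, 0 ≤ a) → 0 ≤ l.foldr star 0 := by
  intro l
  induction l with
  | nil => intro _; simp
  | cons a l ih =>
    intro h
    simp only [List.foldr_cons]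
    exact ht.nonneg a _ (h a (.head l)) (ih fun b hb => h b (.tail a hb))

lemma mem_le_fold (ht : IsTDefiner star) :
    ∀ l : List ℝ, (∀ a ∈ l, 0 ≤ a) → ∀ a ∈ l, a ≤ l.foldr star 0 := by
  intro l
  induction l with
  | nil => intro _ a ha; simp at ha
  | cons b l ih =>
    intro h a ha
    have hb : 0 ≤ b := h b (.head l)
    have hl : ∀ c ∈ l, 0 ≤ c := fun c hc => h c (.tail b hc)
    have hfl : 0 ≤ l.foldr star 0 := fold_nonneg ht l hl
    simp only [List.foldr_cons]
    rcases List.mem_cons.1 ha with rfl | ha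
    · calc a = star a 0 := (ht.zero_id a hb).symm
        _ ≤ star a (l.foldr star 0) := star_mono_right ht hb le_rfl hfl hfl
    · calc a ≤ l.foldr star 0 := ih hl a ha
        _ = star (l.foldr star 0) 0 := (ht.zero_id _ hfl).symm
        _ = star 0 (l.foldr star 0) := ht.comm _ _ hfl le_rfl
        _ ≤ star b (l.foldr star 0) := ht.mono 0 b _ le_rfl hb hfl hb

lemma key_delta (ht : IsTDefiner star) :
    ∀ (n : ℕ) (ε : ℝ), 0 < ε → ∃ δ > 0, ∀ l : List ℝ, l.length = n →
      (∀ a ∈ l, 0 ≤ a ∧ a < δ) → l.foldr star 0 < ε := by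
  intro n
  induction n with
  | zero =>
    intro ε hε
    refine ⟨1, one_pos, fun l hl _ => ?_⟩
    rw [List.length_eq_zero_iff] at hl
    simpa [hl]
  | succ m ih =>
    intro ε hε
    obtain ⟨δ₂, hδ₂, h₂⟩ := ih (ε / 2) (half_pos hε)
    have hε2 : (0:ℝ) ≤ ε / 2 := (half_pos hε).le
    have hcont : ContinuousWithinAt (fun a => star a (ε / 2)) (Set.Ici 0) 0 :=
      (ht.cont (ε / 2) hε2).continuousWithinAt (Set.mem_Ici.2 le_rfl)
    have h0 : star 0 (ε / 2) = ε / 2 := by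
      rw [ht.comm 0 (ε/2) le_rfl hε2, ht.zero_id _ hε2]
    have h0' : (fun a => star a (ε / 2)) 0 < ε := by
      simp only []; rw [h0]; linarith
    have hev : ∀ᶠ a in nhdsWithin 0 (Set.Ici 0), star a (ε / 2) < ε :=
      Filter.Tendsto.eventually_lt_const h0' hcont
    obtain ⟨δ₁, hδ₁, h₁⟩ := Metric.mem_nhdsWithin_iff.1 hev
    refine ⟨min δ₁ δ₂, lt_min hδ₁ hδ₂, fun l hl hmem => ?_⟩
    match l with
    | a :: l' =>
      have ha := hmem a (.head l')
      have hl' : ∀ b ∈ l', 0 ≤ b ∧ b < δ₂ :=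
        fun b hb => ⟨(hmem b (.tail a hb)).1,
          (hmem b (.tail a hb)).2.trans_le (min_le_right _ _)⟩
      have hfold := h₂ l' (by simpa using hl) hl'
      have hfnn : 0 ≤ l'.foldr star 0 := fold_nonneg ht l' fun b hb => (hl' b hb).1
      simp only [List.foldr_cons]
      calc star a (l'.foldr star 0) ≤ star a (ε / 2) :=
            star_mono_right ht ha.1 hfnn hε2 hfold.le
        _ < ε := h₁ ⟨by
              simpa [Metric.mem_ball, Real.dist_eq, abs_of_nonneg ha.1] using
                ha.2.trans_le (min_le_left _ _), Set.mem_Ici.2 ha.1⟩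

end Aux

theorem complete_prod_starSum {n : ℕ} (X : Fin n → Type*) [∀ i, Nonempty (X i)]
    (star : ℝ → ℝ → ℝ) (d : ∀ i, X i → X i → ℝ)
    (ht : IsTDefiner star) (hd : ∀ i, IsStarMetric star (d i)) :
    StarComplete
      (fun x y : ∀ i, X i => (List.ofFn fun i => d i (x i) (y i)).foldr star 0) ↔
    ∀ i, StarComplete (d i) := by
  constructor
  · -- product complete → each factor complete
    intro hP i xseq hxc
    let p : ∀ j, X j := fun j => Classical.arbitrary _
    let y : ℕ → ∀ j, X j := fun k => Function.update p i (xseq k)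
    have hyc : StarCauchy
        (fun x y : ∀ i, X i => (List.ofFn fun i => d i (x i) (y i)).foldr star 0) y := by
      intro ε hε
      obtain ⟨δ, hδ, hδp⟩ := key_delta ht n ε hε
      obtain ⟨k, hk⟩ := hxc δ hδ
      refine ⟨k, fun a ha b hb => ?_⟩
      apply hδp _ (by simp)
      intro r hr
      obtain ⟨j, rfl⟩ := List.mem_ofFn.1 hr
      refine ⟨(hd j).nonneg _ _, ?_⟩
      by_cases hji : j = i
      · subst hji
        simpa [y, Function.update_self] using hk a ha b hb
      · have h1 : y a j = p j := Function.update_of_ne hji _ _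
        have h2 : y b j = p j := Function.update_of_ne hji _ _
        simpa [h1, h2, ((hd j).eq_zero_iff (p j) (p j)).2 rfl] using hδ
    obtain ⟨x₀, hx₀⟩ := hP y hyc
    refine ⟨x₀ i, fun ε hε => ?_⟩
    obtain ⟨k, hk⟩ := hx₀ ε hε
    refine ⟨k, fun a ha => ?_⟩
    have hmem : d i (y a i) (x₀ i) ∈ List.ofFn (fun j => d j (y a j) (x₀ j)) :=
      List.mem_ofFn.2 ⟨i, rfl⟩
    have hnn : ∀ r ∈ List.ofFn (fun j => d j (y a j) (x₀ j)), 0 ≤ r := by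
      intro r hr
      obtain ⟨j, rfl⟩ := List.mem_ofFn.1 hr
      exact (hd j).nonneg _ _
    have hle := mem_le_fold ht _ hnn _ hmem
    have : y a i = xseq a := Function.update_self _ _ _
    rw [this] at hle
    exact lt_of_le_of_lt hle (hk a ha)
  · -- each factor complete → product complete
    intro hC x hxc
    have hcoord : ∀ i, StarCauchy (d i) (fun k => x k i) := by
      intro i ε hε
      obtain ⟨k, hk⟩ := hxc ε hε
      refine ⟨k, fun a ha b hb => ?_⟩
      have hnn : ∀ r ∈ List.ofFn (fun j => d j (x a j) (x b j)), 0 ≤ r := by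
        intro r hr
        obtain ⟨j, rfl⟩ := List.mem_ofFn.1 hr
        exact (hd j).nonneg _ _
      have hmem : d i (x a i) (x b i) ∈ List.ofFn (fun j => d j (x a j) (x b j)) :=
        List.mem_ofFn.2 ⟨i, rfl⟩
      exact lt_of_le_of_lt (mem_le_fold ht _ hnn _ hmem) (hk a ha b hb)
    choose x₀ hx₀ using fun i => hC i _ (hcoord i)
    refine ⟨x₀, fun ε hε => ?_⟩
    obtain ⟨δ, hδ, hδp⟩ := key_delta ht n ε hε
    choose k hk using fun i => hx₀ i δ hδ
    refine ⟨Finset.univ.sup k, fun a ha => ?_⟩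
    apply hδp _ (by simp)
    intro r hr
    obtain ⟨j, rfl⟩ := List.mem_ofFn.1 hr
    exact ⟨(hd j).nonneg _ _, hk j a (le_trans (Finset.le_sup (Finset.mem_univ j)) ha)⟩
end

section
/- In a complete ⋆-metric space (X, d⋆), the intersection ⋂ₙ Aₙ of a countable sequence A₁, A₂, … of dense open subsets is dense. (Baire category theorem for ⋆-metric spaces.) -/
section BaireAux

variable {X : Type*} {star : ℝ → ℝ → ℝ} {d : X → X → ℝ}

lemma tdef_zero_left (ht : IsTDefiner star) {b : ℝ} (hb : 0 ≤ b) : star 0 b = b := by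
  rw [ht.comm 0 b le_rfl hb, ht.zero_id b hb]

lemma tdef_small (ht : IsTDefiner star) {b c : ℝ} (hb : 0 ≤ b) (hc : b < c) :
    ∃ δ > 0, ∀ t, 0 ≤ t → t < δ → star t b < c := by
  have hcont : ContinuousWithinAt (fun a => star a b) (Set.Ici (0:ℝ)) 0 :=
    ht.cont b hb 0 Set.self_mem_Ici
  have h0 : star 0 b = b := tdef_zero_left ht hb
  have hmem : (fun a => star a b) ⁻¹' Set.Iio c ∈ nhdsWithin (0:ℝ) (Set.Ici 0) := by
    apply hcont
    rw [show (fun a => star a b) 0 = b from h0]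
    exact Iio_mem_nhds hc
  rw [Metric.mem_nhdsWithin_iff] at hmem
  obtain ⟨δ, hδ, hsub⟩ := hmem
  refine ⟨δ, hδ, fun t ht0 htδ => ?_⟩
  exact hsub ⟨by simpa [Real.dist_eq, abs_of_nonneg ht0] using htδ, ht0⟩

lemma tdef_mono2 (ht : IsTDefiner star) {a b c : ℝ} (ha : 0 ≤ a) (hb : 0 ≤ b) (hc : 0 ≤ c)
    (h : a ≤ b) : star c a ≤ star c b := by
  rw [ht.comm c a hc ha, ht.comm c b hc hb]
  exact ht.mono a b c ha hb hc h

lemma tdef_delta (ht : IsTDefiner star) {ε : ℝ} (hε : 0 < ε) :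
    ∃ δ > 0, δ ≤ ε / 2 ∧ star δ δ < ε := by
  obtain ⟨δ', hδ', h⟩ := tdef_small ht (b := ε/2) (c := ε) (by linarith) (by linarith)
  refine ⟨min (δ'/2) (ε/2), by positivity, min_le_right _ _, ?_⟩
  have hδ0 : (0:ℝ) ≤ min (δ'/2) (ε/2) := by positivity
  calc star (min (δ'/2) (ε/2)) (min (δ'/2) (ε/2))
      ≤ star (min (δ'/2) (ε/2)) (ε/2) :=
        tdef_mono2 ht hδ0 (by linarith) hδ0 (min_le_right _ _)
    _ < ε := h _ hδ0 (lt_of_le_of_lt (min_le_left _ _) (by linarith))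

lemma ball_open (ht : IsTDefiner star) (hd : IsStarMetric star d) (a : X) (r : ℝ) :
    (starTop d).IsOpen {y | d a y < r} := by
  intro x hx
  obtain ⟨δ, hδ, h⟩ := tdef_small ht (hd.nonneg a x) hx
  refine ⟨δ, hδ, fun z hz => ?_⟩
  calc d a z ≤ star (d a x) (d x z) := hd.star_triangle a z x
    _ = star (d x z) (d a x) := ht.comm _ _ (hd.nonneg _ _) (hd.nonneg _ _)
    _ < r := h _ (hd.nonneg _ _) hz

lemma closed_limit (ht : IsTDefiner star) (hd : IsStarMetric star d)
    {x : ℕ → X} {z a : X} {ρ : ℝ} (hρ : 0 ≤ ρ)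
    (hconv : StarConvTo d x z) {k : ℕ} (h : ∀ m ≥ k, d a (x m) ≤ ρ) : d a z ≤ ρ := by
  by_contra hlt
  push_neg at hlt
  obtain ⟨δ, hδ, hs⟩ := tdef_small ht hρ hlt
  obtain ⟨k', hk'⟩ := hconv δ hδ
  have h1 : d a (x (max k k')) ≤ ρ := h _ (le_max_left _ _)
  have h2 : d (x (max k k')) z < δ := hk' _ (le_max_right _ _)
  have h3 : d a z ≤ star ρ (d (x (max k k')) z) :=
    (hd.star_triangle _ _ _).trans (ht.mono _ _ _ (hd.nonneg _ _) hρ (hd.nonneg _ _) h1)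
  rw [ht.comm ρ _ hρ (hd.nonneg _ _)] at h3
  exact absurd (h3.trans_lt (hs _ (hd.nonneg _ _) h2)) (lt_irrefl _)

end BaireAux

theorem baire_starMetric {X : Type*} (star : ℝ → ℝ → ℝ) (d : X → X → ℝ)
    (ht : IsTDefiner star) (hd : IsStarMetric star d) (hX : StarComplete d)
    (A : ℕ → Set X) (ho : ∀ n, (starTop d).IsOpen (A n))
    (hdense : ∀ n, @Dense X (starTop d) (A n)) :
    @Dense X (starTop d) (⋂ n, A n) := by
  letI : TopologicalSpace X := starTop d
  rw [dense_iff_inter_open]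
  rintro U hU ⟨a, ha⟩
  obtain ⟨r, hr, hball⟩ := hU a ha
  have step : ∀ (n : ℕ) (p : X × ℝ), 0 < p.2 → ∃ q : X × ℝ, 0 < q.2 ∧
      q.2 ≤ p.2 / 2 ∧ star q.2 q.2 < p.2 ∧
      {z | d q.1 z ≤ q.2} ⊆ A n ∩ {z | d p.1 z < p.2} := by
    intro n p hp
    have hballopen : IsOpen {z | d p.1 z < p.2} := ball_open ht hd _ _
    have hne : ({z | d p.1 z < p.2} ∩ A n).Nonempty := by
      apply dense_iff_inter_open.1 (hdense n) _ hballopen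
      refine ⟨p.1, ?_⟩
      show d p.1 p.1 < p.2
      rw [(hd.eq_zero_iff p.1 p.1).2 rfl]
      exact hp
    obtain ⟨y, hy1, hy2⟩ := hne
    have hAopen : IsOpen (A n) := ho n
    have hopen : IsOpen (A n ∩ {z | d p.1 z < p.2}) := hAopen.inter hballopen
    obtain ⟨s, hs, hsub⟩ := hopen y ⟨hy2, hy1⟩
    obtain ⟨δ, hδ, hδle, hδstar⟩ := tdef_delta ht (lt_min hs hp)
    have hmin1 := min_le_left s p.2
    have hmin2 := min_le_right s p.2
    refine ⟨(y, δ), hδ, by simpa using hδle.trans (by linarith), ?_, ?_⟩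
    · exact hδstar.trans_le (min_le_right _ _)
    · intro z hz
      apply hsub
      show d y z < s
      have : d y z ≤ δ := hz
      linarith
  choose G hG0 hG1 hG2 hG3 using step
  let F : ℕ → {p : X × ℝ // 0 < p.2} := fun n =>
    Nat.rec ⟨(a, r), hr⟩ (fun n q => ⟨G n q.1 q.2, hG0 n q.1 q.2⟩) n
  let x : ℕ → X := fun n => (F n).1.1
  let ρ : ℕ → ℝ := fun n => (F n).1.2
  have hρpos : ∀ n, 0 < ρ n := fun n => (F n).2
  have hhalf : ∀ n, ρ (n+1) ≤ ρ n / 2 := fun n => hG1 n (F n).1 (F n).2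
  have hstar : ∀ n, star (ρ (n+1)) (ρ (n+1)) < ρ n := fun n => hG2 n (F n).1 (F n).2
  have hsubn : ∀ n, {z | d (x (n+1)) z ≤ ρ (n+1)} ⊆ A n ∩ {z | d (x n) z < ρ n} :=
    fun n => hG3 n (F n).1 (F n).2
  have hchain : ∀ n m, n ≤ m → {z | d (x m) z ≤ ρ m} ⊆ {z | d (x n) z ≤ ρ n} := by
    intro n m h
    induction m, h using Nat.le_induction with
    | base => exact subset_rfl
    | succ m hm ih => exact fun z hz => ih (show d (x m) z ≤ ρ m from le_of_lt (hsubn m hz).2)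
  have hself : ∀ n, d (x n) (x n) ≤ ρ n := fun n => by
    rw [(hd.eq_zero_iff (x n) (x n)).2 rfl]; exact (hρpos n).le
  have hdist : ∀ n m, n ≤ m → d (x n) (x m) ≤ ρ n :=
    fun n m h => hchain n m h (hself m)
  have hρbound : ∀ n, ρ n ≤ r / 2 ^ n := by
    intro n
    induction n with
    | zero => simp [ρ, F]
    | succ n ih =>
      have := hhalf n
      have h2 : (0:ℝ) < 2 ^ n := by positivity
      rw [pow_succ]
      rw [div_mul_eq_div_div]
      linarith
  have hc : StarCauchy d x := by
    intro ε hε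
    obtain ⟨n, hn⟩ : ∃ n : ℕ, ρ n < ε := by
      obtain ⟨n, hn⟩ := exists_pow_lt_of_lt_one (div_pos hε hr) (by norm_num : (1:ℝ)/2 < 1)
      refine ⟨n, lt_of_le_of_lt (hρbound n) ?_⟩
      have he : r / 2 ^ n = r * (1/2) ^ n := by
        rw [div_pow, one_pow]; ring
      rw [he]
      calc r * (1/2) ^ n < r * (ε/r) := by exact mul_lt_mul_of_pos_left hn hr
        _ = ε := by field_simp
    refine ⟨n+1, fun m hm j hj => ?_⟩
    have h1 : d (x m) (x (n+1)) ≤ ρ (n+1) := by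
      rw [hd.symm]; exact hdist _ _ hm
    have h2 : d (x (n+1)) (x j) ≤ ρ (n+1) := hdist _ _ hj
    calc d (x m) (x j) ≤ star (d (x m) (x (n+1))) (d (x (n+1)) (x j)) := hd.star_triangle _ _ _
      _ ≤ star (ρ (n+1)) (d (x (n+1)) (x j)) :=
          ht.mono _ _ _ (hd.nonneg _ _) (hρpos (n+1)).le (hd.nonneg _ _) h1
      _ ≤ star (ρ (n+1)) (ρ (n+1)) :=
          tdef_mono2 ht (hd.nonneg _ _) (hρpos (n+1)).le (hρpos (n+1)).le h2
      _ < ρ n := hstar n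
      _ < ε := hn
  obtain ⟨z, hz⟩ := hX x hc
  have hzball : ∀ n, d (x (n+1)) z ≤ ρ (n+1) := fun n =>
    closed_limit ht hd (hρpos (n+1)).le hz (k := n+1) (fun m hm => hdist _ _ hm)
  have hzA : ∀ n, z ∈ A n := fun n => (hsubn n (hzball n)).1
  have hzU : z ∈ U := hball (hsubn 0 (hzball 0)).2
  exact ⟨z, hzU, Set.mem_iInter.2 hzA⟩
end
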